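/- arXiv:2009.10671 — 2 statements merged into one kernel-verified Lean document; each statement's English description precedes it below -/
import Mathlib

section
/- Let k ≥ 0 be an integer, and let 0 < φ, μ ≤ 1 with φ ≤ 1/5. Then there is an integer K ≥ k with the following property: for every graph G and every (φ,μ)-shrink-resistant blockade (B_i : i∈I) in G of length at least K, if 1−μ ≥ |G|^{-φ}, then there exists I' ⊆ I with |I'| = k such that (B_i : i∈I') has a (5φ,μ)-band. -/
/-!
Write `ε = |G|^(-φ)`, `d i j` for the max-degree from `B i` to `B j` and
`r i j = d i j / |B j|`, which lies in `[1/|G|, 1]` because shrink-resistance forces `d i j > 0`.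
Shrink-resistance also leaves fewer than `μ|B i|` vertices of `B i` with at most `ε d i j`
neighbours in `B j`; as `1 - μ ≥ ε`, counting the edges between `B i` and `B j` from both sides
gives `ε² r j i ≤ r i j`. Colour the pair `{i, j}` by the `n` with
`max (r i j) (r j i) ∈ (ε^(2(n+1)), ε^(2n)]`; only `⌊1/(2φ)⌋ + 1` colours occur, so Ramsey's
theorem gives `k` blocks all of whose pairs have one colour `a`. Then `τ = ε^(2a)` satisfies
`ε⁴τ ≤ r h j ≤ τ` on them, and shrink-resistance, which loses one more factor `ε`, makes `τ`
a `(5φ, μ)`-band.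
-/

/-- The max-degree from `X` to `Y`: the maximum over `v ∈ X` of the number of
neighbours of `v` in `Y` (0 if `X` is empty). -/
noncomputable def maxDegFrom {V : Type} (G : SimpleGraph V) (X Y : Set V) : ℕ :=
  sSup ((fun v => (G.neighborSet v ∩ Y).ncard) '' X)

/-- `X` is anticomplete to `Y`: there are no edges between them. -/
def AnticompSets {V : Type} (G : SimpleGraph V) (X Y : Set V) : Prop :=
  ∀ x ∈ X, ∀ y ∈ Y, ¬ G.Adj x y

/-- A pure pair: disjoint sets, complete or anticomplete to each other. -/
def PurePair {V : Type} (G : SimpleGraph V) (Z1 Z2 : Set V) : Prop :=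
  Disjoint Z1 Z2 ∧ ((∀ x ∈ Z1, ∀ y ∈ Z2, G.Adj x y) ∨ AnticompSets G Z1 Z2)

/-- `X` covers `B`: every vertex of `B` has a neighbour in `X`. -/
def CoversSet {V : Type} (G : SimpleGraph V) (X B : Set V) : Prop :=
  ∀ v ∈ B, ∃ x ∈ X, G.Adj x v

/-- `G` contains `H` as an induced subgraph. -/
def GraphContains {V W : Type} (G : SimpleGraph V) (H : SimpleGraph W) : Prop :=
  ∃ f : W → V, Function.Injective f ∧ ∀ a b : W, G.Adj (f a) (f b) ↔ H.Adj a b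

/-- The ordered graph `G` contains the ordered graph `H`: an order-preserving
induced-subgraph embedding. -/
def OrdGraphContains {V W : Type} [LinearOrder V] [LinearOrder W]
    (G : SimpleGraph V) (H : SimpleGraph W) : Prop :=
  ∃ f : W → V, StrictMono f ∧ ∀ a b : W, G.Adj (f a) (f b) ↔ H.Adj a b

/-- A blockade: a family of pairwise disjoint nonempty vertex subsets indexed by
a finite set of integers. -/
def IsBlockade {V : Type} (I : Finset ℤ) (B : ℤ → Set V) : Prop :=
  (∀ i ∈ I, (B i).Nonempty) ∧ ∀ i ∈ I, ∀ j ∈ I, i ≠ j → Disjoint (B i) (B j)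

/-- A blockade in an ordered graph: additionally the blocks are intervals
numbered in order. -/
def IsOrdBlockade {V : Type} [LinearOrder V] (I : Finset ℤ) (B : ℤ → Set V) : Prop :=
  IsBlockade I B ∧ ∀ i ∈ I, ∀ j ∈ I, i < j → ∀ u ∈ B i, ∀ v ∈ B j, u < v

/-- The blockade `(B i : i ∈ I)` has width at least `w`
(the width being the minimum cardinality of a block, `|G|` if `I = ∅`). -/
def WidthGE {V : Type} [Fintype V] (I : Finset ℤ) (B : ℤ → Set V) (w : ℝ) : Prop :=
  (∀ i ∈ I, w ≤ ((B i).ncard : ℝ)) ∧ w ≤ (Fintype.card V : ℝ)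

/-- The width of a blockade: the minimum cardinality of a block (`|G|` if `I = ∅`). -/
noncomputable def blockadeWidth {V : Type} [Fintype V] (I : Finset ℤ) (B : ℤ → Set V) : ℕ :=
  if h : I.Nonempty then I.inf' h (fun i => (B i).ncard) else Fintype.card V

/-- The blockade has shrinkage at most `s`: its width is at least `|G|^(1-s)`. -/
def ShrinkageLE {V : Type} [Fintype V] (I : Finset ℤ) (B : ℤ → Set V) (s : ℝ) : Prop :=
  WidthGE I B ((Fintype.card V : ℝ) ^ ((1 : ℝ) - s))

/-- The blockade has linkage at most `lam`: for all distinct `i, j`, the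
max-degree from `B i` to `B j` is at most `lam * |B j|`. -/
def LinkageLE {V : Type} (G : SimpleGraph V) (I : Finset ℤ) (B : ℤ → Set V) (lam : ℝ) : Prop :=
  ∀ i ∈ I, ∀ j ∈ I, i ≠ j → (maxDegFrom G (B i) (B j) : ℝ) ≤ lam * ((B j).ncard : ℝ)

/-- The blockade is `(phi, mu)`-shrink-resistant. -/
def ShrinkResistant {V : Type} [Fintype V] (G : SimpleGraph V) (I : Finset ℤ)
    (B : ℤ → Set V) (phi mu : ℝ) : Prop :=
  ∀ h ∈ I, ∀ j ∈ I, h ≠ j → ∀ X ⊆ B h, ∀ Y ⊆ B j,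
    mu * ((B h).ncard : ℝ) ≤ (X.ncard : ℝ) → mu * ((B j).ncard : ℝ) ≤ (Y.ncard : ℝ) →
    (maxDegFrom G (B h) (B j) : ℝ) * (Fintype.card V : ℝ) ^ (-phi) < (maxDegFrom G X Y : ℝ)

/-- `tau` is a `(phi, mu)`-band for the blockade `(B i : i ∈ I)`. -/
def IsBand {V : Type} [Fintype V] (G : SimpleGraph V) (I : Finset ℤ)
    (B : ℤ → Set V) (tau phi mu : ℝ) : Prop :=
  ∀ h ∈ I, ∀ j ∈ I, h ≠ j →
    ((maxDegFrom G (B h) (B j) : ℝ) ≤ tau * ((B j).ncard : ℝ)) ∧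
    ∀ X ⊆ B h, ∀ Y ⊆ B j,
      mu * ((B h).ncard : ℝ) ≤ (X.ncard : ℝ) → mu * ((B j).ncard : ℝ) ≤ (Y.ncard : ℝ) →
      tau * (Fintype.card V : ℝ) ^ (-phi) * ((B j).ncard : ℝ) < (maxDegFrom G X Y : ℝ)

/-- There do not exist disjoint anticomplete sets both of size at least `|G|^(1-c)`. -/
def NoBigAnticomp {V : Type} [Fintype V] (G : SimpleGraph V) (c : ℝ) : Prop :=
  ¬ ∃ Z1 Z2 : Set V, Disjoint Z1 Z2 ∧ AnticompSets G Z1 Z2 ∧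
      (Fintype.card V : ℝ) ^ ((1 : ℝ) - c) ≤ (Z1.ncard : ℝ) ∧
      (Fintype.card V : ℝ) ^ ((1 : ℝ) - c) ≤ (Z2.ncard : ℝ)

/-- The blockade `(B i : i ∈ H ∪ I ∪ J)` is leaf-covered with partition `(H, I, J)`
and parameters `w, W, lam, phi, mu, tau`. -/
def LeafCovered {V : Type} [Fintype V] (G : SimpleGraph V) (H I J : Finset ℤ)
    (B : ℤ → Set V) (w W lam phi mu tau : ℝ) : Prop :=
  WidthGE H B w ∧ LinkageLE G H B lam ∧ WidthGE I B W ∧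
  (∀ h ∈ H, ∀ j ∈ J, ∃ X ⊆ B j, CoversSet G X (B h) ∧
      ∀ i ∈ (H ∪ I).erase h, AnticompSets G X (B i)) ∧
  IsBand G (I ∪ J) B tau phi mu ∧
  (∀ h ∈ H, ∀ i ∈ I ∪ J, (maxDegFrom G (B h) (B i) : ℝ) ≤ tau * ((B i).ncard : ℝ))

/-- The clique number of a graph. -/
noncomputable def cliqueNumber {V : Type} (G : SimpleGraph V) : ℕ :=
  sSup {n | ∃ s : Finset V, G.IsNClique n s}

open Finset

section MaxDegFrom

variable {V : Type} (G : SimpleGraph V)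

lemma maxDegFrom_le {X Y : Set V} {c : ℕ} (h : ∀ v ∈ X, (G.neighborSet v ∩ Y).ncard ≤ c) :
    maxDegFrom G X Y ≤ c :=
  csSup_le' <| Set.forall_mem_image.2 h

lemma maxDegFrom_le_of_forall_le {X Y : Set V} {t : ℝ} (ht : 0 ≤ t)
    (h : ∀ v ∈ X, ((G.neighborSet v ∩ Y).ncard : ℝ) ≤ t) : (maxDegFrom G X Y : ℝ) ≤ t :=
  (Nat.cast_le.2 <| maxDegFrom_le G fun v hv => Nat.le_floor (h v hv)).trans (Nat.floor_le ht)

lemma SimpleGraph.sum_ncard_neighborSet_inter_comm (X Y : Finset V) :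
    ∑ v ∈ X, (G.neighborSet v ∩ Y).ncard = ∑ w ∈ Y, (G.neighborSet w ∩ X).ncard := by
  classical
  have key : ∀ (v : V) (Z : Finset V), (G.neighborSet v ∩ Z).ncard = #(Z.filter (G.Adj v)) := by
    intro v Z
    rw [← Set.ncard_coe_finset]
    congr 1
    ext w
    simp [and_comm]
  simp only [key]
  rw [show ∑ w ∈ Y, #(X.filter (G.Adj w)) = ∑ w ∈ Y, #(X.filter (G.Adj · w)) by
    simp only [G.adj_comm]]
  exact sum_card_bipartiteAbove_eq_sum_card_bipartiteBelow _

section Finite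

variable [Finite V]

lemma maxDegFrom_le_ncard (X Y : Set V) : maxDegFrom G X Y ≤ Y.ncard :=
  maxDegFrom_le G fun _ _ => Set.ncard_le_ncard Set.inter_subset_right

lemma ncard_neighborSet_inter_le_maxDegFrom {X : Set V} (Y : Set V) {v : V} (hv : v ∈ X) :
    (G.neighborSet v ∩ Y).ncard ≤ maxDegFrom G X Y :=
  le_csSup ⟨Y.ncard, Set.forall_mem_image.2 fun _ _ =>
    Set.ncard_le_ncard Set.inter_subset_right⟩ ⟨v, hv, rfl⟩

lemma sum_ncard_neighborSet_inter_le_maxDegFrom_mul (X Y : Finset V) :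
    ∑ v ∈ X, (G.neighborSet v ∩ Y).ncard ≤ maxDegFrom G Y X * #Y := by
  rw [G.sum_ncard_neighborSet_inter_comm, mul_comm]
  exact sum_le_card_nsmul _ _ _ fun w hw => ncard_neighborSet_inter_le_maxDegFrom G _ hw

lemma maxDegFrom_mul_ncard_mul_sq_le {B₁ B₂ : Set V} {μ ε : ℝ} (hε : 0 ≤ ε)
    (hεμ : ε ≤ 1 - μ)
    (hSR : ∀ X ⊆ B₁, μ * B₁.ncard ≤ X.ncard →
      (maxDegFrom G B₁ B₂ : ℝ) * ε < maxDegFrom G X B₂) :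
    (maxDegFrom G B₁ B₂ : ℝ) * B₁.ncard * ε ^ 2 ≤
      maxDegFrom G B₂ B₁ * B₂.ncard := by
  classical
  obtain ⟨S₁, rfl⟩ := B₁.toFinite.exists_finset_coe
  obtain ⟨S₂, rfl⟩ := B₂.toFinite.exists_finset_coe
  set d : ℝ := (maxDegFrom G S₁ S₂ : ℝ)
  set high := S₁.filter fun v => d * ε < (G.neighborSet v ∩ S₂).ncard
  have hd : 0 ≤ d * ε := by positivity
  have hlow : (#(S₁ \ high) : ℝ) < μ * #S₁ := by
    by_contra! h
    have hlt := hSR (S₁ \ high : Finset V) (coe_subset.2 sdiff_subset)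
      (by rwa [Set.ncard_coe_finset, Set.ncard_coe_finset])
    have hle : (maxDegFrom G ↑(S₁ \ high) S₂ : ℝ) ≤ d * ε :=
      maxDegFrom_le_of_forall_le G hd fun v hv => by
        simpa [high, mem_sdiff.1 (mem_coe.1 hv) |>.1] using (mem_sdiff.1 (mem_coe.1 hv)).2
    linarith
  have hhigh : ε * #S₁ ≤ #high := by
    have hsplit : (#(S₁ \ high) : ℝ) + #high = #S₁ := by
      exact_mod_cast card_sdiff_add_card_eq_card (filter_subset _ _)
    nlinarith [mul_le_mul_of_nonneg_right hεμ (Nat.cast_nonneg (α := ℝ) #S₁)]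
  have hsum : d * ε * #high ≤ ∑ v ∈ S₁, ((G.neighborSet v ∩ S₂).ncard : ℝ) := by
    calc d * ε * #high ≤ ∑ v ∈ high, ((G.neighborSet v ∩ S₂).ncard : ℝ) := by
          rw [mul_comm, ← nsmul_eq_mul]
          exact card_nsmul_le_sum _ _ _ fun v hv => (mem_filter.1 hv).2.le
      _ ≤ _ := sum_le_sum_of_subset_of_nonneg (filter_subset _ _) fun _ _ _ => by positivity
  simp only [Set.ncard_coe_finset]
  calc d * #S₁ * ε ^ 2 = d * ε * (ε * #S₁) := by ring
    _ ≤ d * ε * #high := mul_le_mul_of_nonneg_left hhigh hd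
    _ ≤ ∑ v ∈ S₁, ((G.neighborSet v ∩ S₂).ncard : ℝ) := hsum
    _ ≤ maxDegFrom G S₂ S₁ * #S₂ := by
      exact_mod_cast sum_ncard_neighborSet_inter_le_maxDegFrom_mul G S₁ S₂

end Finite

end MaxDegFrom

namespace Finset

variable {α : Type*} [LinearOrder α] {m : ℕ} (c : α → α → ℕ)

lemma exists_subset_color_eq_left (hm : 0 < m) (n : ℕ) {S : Finset α}
    (hc : ∀ i ∈ S, ∀ j ∈ S, i < j → c i j < m) (hS : (m + 1) ^ n ≤ #S) :
    ∃ T ⊆ S, #T = n ∧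
      ∃ f : α → ℕ, ∀ i ∈ T, f i < m ∧ ∀ j ∈ T, i < j → c i j = f i := by
  induction n generalizing S with
  | zero => exact ⟨∅, empty_subset _, rfl, fun _ => 0, by simp⟩
  | succ n ih =>
    have hne : S.Nonempty := card_pos.1 (lt_of_lt_of_le (by positivity) hS)
    set v := S.min' hne
    have hv : v ∈ S := S.min'_mem hne
    have hrest : #(range m) * (m + 1) ^ n ≤ #(S.erase v) := by
      rw [card_range, card_erase_of_mem hv, mul_comm]
      rw [pow_succ, mul_add_one] at hS
      have := Nat.one_le_pow n (m + 1) m.succ_pos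
      omega
    have hmaps : ∀ x ∈ S.erase v, c v x ∈ range m := fun x hx =>
      mem_range.2 <| hc v hv x (mem_of_mem_erase hx) (S.min'_lt_of_mem_erase_min' hne hx)
    obtain ⟨a, ha, hfib⟩ :=
      exists_le_card_fiber_of_mul_le_card_of_maps_to hmaps ⟨0, mem_range.2 hm⟩ hrest
    have hsub : (S.erase v).filter (fun x => c v x = a) ⊆ S :=
      (filter_subset _ _).trans (erase_subset _ _)
    obtain ⟨T, hTS, hT, f, hf⟩ := ih (fun i hi j hj => hc i (hsub hi) j (hsub hj)) hfib
    have hvT : v ∉ T := fun h => by simpa using (mem_filter.1 (hTS h)).1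
    refine ⟨insert v T, insert_subset hv (hTS.trans hsub), by rw [card_insert_of_notMem hvT, hT],
      Function.update f v a, ?_⟩
    intro i hi
    rcases mem_insert.1 hi with rfl | hi
    · refine ⟨by simpa using ha, fun j hj hij => ?_⟩
      have hjT : j ∈ T := (mem_insert.1 hj).resolve_left hij.ne'
      simpa using (mem_filter.1 (hTS hjT)).2
    · have hiv : i ≠ v := ne_of_mem_of_not_mem hi hvT
      rw [Function.update_of_ne hiv]
      refine ⟨(hf i hi).1, fun j hj hij => ?_⟩
      rcases mem_insert.1 hj with rfl | hj
      · exact absurd (S.min'_le i (hTS.trans hsub hi)) (not_le.2 hij)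
      · exact (hf i hi).2 j hj hij

lemma exists_subset_monochromatic (hm : 0 < m) (k : ℕ) {S : Finset α}
    (hc : ∀ i ∈ S, ∀ j ∈ S, i < j → c i j < m) (hS : (m + 1) ^ (m * k) ≤ #S) :
    ∃ T ⊆ S, #T = k ∧ ∃ a, ∀ i ∈ T, ∀ j ∈ T, i < j → c i j = a := by
  obtain ⟨T, hTS, hT, f, hf⟩ := exists_subset_color_eq_left c hm (m * k) hc hS
  obtain ⟨a, -, hfib⟩ := exists_le_card_fiber_of_mul_le_card_of_maps_to
    (fun i hi => mem_range.2 (hf i hi).1) ⟨0, mem_range.2 hm⟩ (by rw [card_range, hT])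
  obtain ⟨U, hU, hUk⟩ := exists_subset_card_eq hfib
  refine ⟨U, fun i hi => hTS (mem_filter.1 (hU hi)).1, hUk, a, fun i hi j hj hij => ?_⟩
  obtain ⟨hiT, hfi⟩ := mem_filter.1 (hU hi)
  rw [(hf i hiT).2 j (mem_filter.1 (hU hj)).1 hij, hfi]

end Finset

namespace Real

variable {b x : ℝ}

lemma mem_Ioc_pow_floor_logb (hb₀ : 0 < b) (hb₁ : b < 1) (hx : 0 < x) (hx₁ : x ≤ 1) :
    x ∈ Set.Ioc (b ^ (⌊logb b x⌋₊ + 1)) (b ^ ⌊logb b x⌋₊) := by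
  have hlt := (logb_lt_iff_lt_rpow_of_base_lt_one hb₀ hb₁ hx).1 (Nat.lt_floor_add_one _)
  have hle := (le_logb_iff_rpow_le_of_base_lt_one hb₀ hb₁ hx).1
    (Nat.floor_le (logb_nonneg_of_base_lt_one hb₀ hb₁ hx hx₁))
  exact ⟨by exact_mod_cast hlt, by exact_mod_cast hle⟩

lemma floor_logb_le_of_inv_le {N φ : ℝ} (hN : 1 < N) (hφ : 0 < φ) (hx : N⁻¹ ≤ x)
    (hx₁ : x ≤ 1) :
    ⌊logb ((N ^ (-φ)) ^ 2) x⌋₊ ≤ ⌊1 / (2 * φ)⌋₊ := by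
  have hN₀ : 0 < N := by linarith
  have hε₀ : 0 < (N ^ (-φ)) ^ 2 := by positivity
  have hε₁ : (N ^ (-φ)) ^ 2 < 1 :=
    pow_lt_one₀ (by positivity) (rpow_lt_one_of_one_lt_of_neg hN (by linarith)) two_ne_zero
  set n := ⌊logb ((N ^ (-φ)) ^ 2) x⌋₊
  have h := hx.trans (mem_Ioc_pow_floor_logb hε₀ hε₁ ((inv_pos.2 hN₀).trans_le hx) hx₁).2
  rw [← pow_mul, ← rpow_natCast, ← rpow_mul hN₀.le, ← rpow_neg_one,
    rpow_le_rpow_left_iff hN] at h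
  apply Nat.le_floor
  rw [le_div_iff₀ (by positivity)]
  push_cast at h
  linarith

end Real

section Blockade

variable {V : Type} (G : SimpleGraph V) (B : ℤ → Set V)

noncomputable def relMaxDegFrom (i j : ℤ) : ℝ := maxDegFrom G (B i) (B j) / (B j).ncard

noncomputable def pairColor (δ : ℝ) (i j : ℤ) : ℕ :=
  ⌊Real.logb δ (max (relMaxDegFrom G B i j) (relMaxDegFrom G B j i))⌋₊

variable {G B}

lemma relMaxDegFrom_nonneg (i j : ℤ) : 0 ≤ relMaxDegFrom G B i j := by
  unfold relMaxDegFrom; positivity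

lemma pairColor_comm (δ : ℝ) (i j : ℤ) : pairColor G B δ i j = pairColor G B δ j i := by
  rw [pairColor, pairColor, max_comm]

variable [Fintype V] {I : Finset ℤ} {φ μ : ℝ}

lemma relMaxDegFrom_le_one (i j : ℤ) : relMaxDegFrom G B i j ≤ 1 :=
  div_le_one_of_le₀ (by exact_mod_cast maxDegFrom_le_ncard G _ _) (Nat.cast_nonneg _)

namespace ShrinkResistant

variable (hSR : ShrinkResistant G I B φ μ) {h j : ℤ} (hh : h ∈ I) (hj : j ∈ I)
  (hhj : h ≠ j)
include hSR hh hj hhj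

lemma maxDegFrom_pos (hμ : μ ≤ 1) : 0 < maxDegFrom G (B h) (B j) := by
  have := hSR h hh j hj hhj (B h) subset_rfl (B j) subset_rfl
    (mul_le_of_le_one_left (Nat.cast_nonneg _) hμ) (mul_le_of_le_one_left (Nat.cast_nonneg _) hμ)
  by_contra! h0
  simp_all

lemma ncard_pos (hμ : μ ≤ 1) : (0 : ℝ) < (B j).ncard := by
  exact_mod_cast (hSR.maxDegFrom_pos hh hj hhj hμ).trans_le (maxDegFrom_le_ncard G _ _)

lemma maxDegFrom_eq_relMaxDegFrom_mul (hμ : μ ≤ 1) :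
    (maxDegFrom G (B h) (B j) : ℝ) = relMaxDegFrom G B h j * (B j).ncard :=
  (div_mul_cancel₀ _ (hSR.ncard_pos hh hj hhj hμ).ne').symm

lemma inv_card_le_relMaxDegFrom (hμ : μ ≤ 1) :
    (Fintype.card V : ℝ)⁻¹ ≤ relMaxDegFrom G B h j := by
  have hd : (1 : ℝ) ≤ maxDegFrom G (B h) (B j) := by
    exact_mod_cast hSR.maxDegFrom_pos hh hj hhj hμ
  have hBN : ((B j).ncard : ℝ) ≤ Fintype.card V := by
    exact_mod_cast (Set.ncard_le_ncard (Set.subset_univ _)).trans_eq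
      (Set.ncard_univ V |>.trans Nat.card_eq_fintype_card)
  calc (Fintype.card V : ℝ)⁻¹ ≤ 1 / (B j).ncard := by
        rw [one_div]; exact inv_anti₀ (hSR.ncard_pos hh hj hhj hμ) hBN
    _ ≤ relMaxDegFrom G B h j := div_le_div_of_nonneg_right hd (Nat.cast_nonneg _)

lemma sq_mul_relMaxDegFrom_le (hμ : (Fintype.card V : ℝ) ^ (-φ) ≤ 1 - μ) :
    ((Fintype.card V : ℝ) ^ (-φ)) ^ 2 * relMaxDegFrom G B j h ≤ relMaxDegFrom G B h j := by
  have hμ₁ : μ ≤ 1 := by linarith [(by positivity : 0 ≤ (Fintype.card V : ℝ) ^ (-φ))]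
  have key := maxDegFrom_mul_ncard_mul_sq_le G (by positivity) hμ fun X hX hXc =>
    hSR j hj h hh hhj.symm X hX (B h) subset_rfl hXc
      (mul_le_of_le_one_left (Nat.cast_nonneg _) hμ₁)
  unfold relMaxDegFrom
  rw [mul_div_assoc', div_le_div_iff₀ (hSR.ncard_pos hj hh hhj.symm hμ₁)
    (hSR.ncard_pos hh hj hhj hμ₁)]
  linarith

lemma pairColor_lt (hφ : 0 < φ) (hμ : μ ≤ 1) (hN : 1 < (Fintype.card V : ℝ)) :
    pairColor G B (((Fintype.card V : ℝ) ^ (-φ)) ^ 2) h j < ⌊1 / (2 * φ)⌋₊ + 1 :=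
  Nat.lt_succ_of_le <| Real.floor_logb_le_of_inv_le hN hφ
    ((hSR.inv_card_le_relMaxDegFrom hh hj hhj hμ).trans (le_max_left _ _))
    (max_le (relMaxDegFrom_le_one _ _) (relMaxDegFrom_le_one _ _))

end ShrinkResistant

end Blockade

lemma ShrinkResistant.isBand_of_pairColor_eq {V : Type} [Fintype V] {G : SimpleGraph V}
    {B : ℤ → Set V} {I I' : Finset ℤ} {φ μ : ℝ} (hSR : ShrinkResistant G I B φ μ)
    (hφ : 0 < φ) (hμ : (Fintype.card V : ℝ) ^ (-φ) ≤ 1 - μ) (hN : 1 < (Fintype.card V : ℝ))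
    (hI' : I' ⊆ I) (a : ℕ) (hcol : ∀ h ∈ I', ∀ j ∈ I', h ≠ j →
      pairColor G B (((Fintype.card V : ℝ) ^ (-φ)) ^ 2) h j = a) :
    IsBand G I' B ((((Fintype.card V : ℝ) ^ (-φ)) ^ 2) ^ a) (5 * φ) μ := by
  set ε := (Fintype.card V : ℝ) ^ (-φ)
  have hε₀ : 0 < ε := by positivity
  have hε₁ : ε < 1 := Real.rpow_lt_one_of_one_lt_of_neg hN (by linarith)
  have hμ₁ : μ ≤ 1 := by linarith
  intro h hh j hj hhj
  set r := relMaxDegFrom G B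
  have hd := hSR.maxDegFrom_eq_relMaxDegFrom_mul (hI' hh) (hI' hj) hhj hμ₁
  obtain ⟨hlo, hhi⟩ : max (r h j) (r j h) ∈ Set.Ioc ((ε ^ 2) ^ (a + 1)) ((ε ^ 2) ^ a) := by
    rw [← hcol h hh j hj hhj]
    exact Real.mem_Ioc_pow_floor_logb (by positivity) (pow_lt_one₀ hε₀.le hε₁ two_ne_zero)
      ((inv_pos.2 (zero_lt_one.trans hN)).trans_le
        ((hSR.inv_card_le_relMaxDegFrom (hI' hh) (hI' hj) hhj hμ₁).trans (le_max_left _ _)))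
      (max_le (relMaxDegFrom_le_one _ _) (relMaxDegFrom_le_one _ _))
  have hlow : (ε ^ 2) ^ a * (ε ^ 2) ^ 2 ≤ r h j :=
    calc (ε ^ 2) ^ a * (ε ^ 2) ^ 2 = ε ^ 2 * (ε ^ 2) ^ (a + 1) := by ring
      _ ≤ ε ^ 2 * max (r h j) (r j h) := by gcongr
      _ = max (ε ^ 2 * r h j) (ε ^ 2 * r j h) := mul_max_of_nonneg _ _ (by positivity)
      _ ≤ r h j := max_le
        (mul_le_of_le_one_left (relMaxDegFrom_nonneg h j) (pow_le_one₀ hε₀.le hε₁.le))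
        (hSR.sq_mul_relMaxDegFrom_le (hI' hh) (hI' hj) hhj hμ)
  refine ⟨?_, fun X hX Y hY hXc hYc => ?_⟩
  · rw [hd]
    exact mul_le_mul_of_nonneg_right (le_max_left _ _ |>.trans hhi) (Nat.cast_nonneg _)
  · have h5 : (Fintype.card V : ℝ) ^ (-(5 * φ)) = ε ^ 5 := by
      rw [← Real.rpow_mul_natCast (by positivity)]; push_cast; ring_nf
    calc (ε ^ 2) ^ a * (Fintype.card V : ℝ) ^ (-(5 * φ)) * (B j).ncard
        = (ε ^ 2) ^ a * (ε ^ 2) ^ 2 * (B j).ncard * ε := by rw [h5]; ring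
      _ ≤ r h j * (B j).ncard * ε := by gcongr
      _ = maxDegFrom G (B h) (B j) * ε := by rw [hd]
      _ < maxDegFrom G X Y := hSR h (hI' hh) j (hI' hj) hhj X hX Y hY hXc hYc

lemma IsBlockade.one_lt_card {V : Type} [Fintype V] {I : Finset ℤ} {B : ℤ → Set V}
    {φ μ : ℝ} (hB : IsBlockade I B) (hI : I.Nonempty) (hμ₀ : 0 < μ)
    (hμ : (Fintype.card V : ℝ) ^ (-φ) ≤ 1 - μ) : 1 < (Fintype.card V : ℝ) := by
  obtain ⟨i, hi⟩ := hI
  obtain ⟨v, -⟩ := hB.1 i hi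
  have h1 : (1 : ℝ) ≤ Fintype.card V := by exact_mod_cast Fintype.card_pos_iff.2 ⟨v⟩
  refine h1.lt_of_ne fun h => ?_
  rw [← h, Real.one_rpow] at hμ
  linarith

theorem stmt_6_general (k : ℕ) (phi mu : ℝ) (hphi0 : 0 < phi) (hmu0 : 0 < mu) :
    ∃ K : ℕ, k ≤ K ∧
      ∀ (V : Type) [Fintype V] (G : SimpleGraph V) (I : Finset ℤ) (B : ℤ → Set V),
        IsBlockade I B → ShrinkResistant G I B phi mu → K ≤ I.card →
        (Fintype.card V : ℝ) ^ (-phi) ≤ 1 - mu →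
        ∃ I' ⊆ I, I'.card = k ∧
          ∃ tau : ℝ, 0 < tau ∧ tau ≤ 1 ∧ IsBand G I' B tau (5 * phi) mu := by
  set m := ⌊1 / (2 * phi)⌋₊ + 1 with hm
  have hm₀ : 0 < m := by omega
  refine ⟨(m + 1) ^ (m * k),
    (Nat.le_mul_of_pos_left k hm₀).trans (Nat.lt_pow_self (a := m + 1) (by omega)).le, ?_⟩
  intro V _ G I B hB hSR hK hμ
  have hN := hB.one_lt_card (Finset.card_pos.1 (lt_of_lt_of_le (by positivity) hK)) hmu0 hμ
  have hμ₁ : mu ≤ 1 := by linarith [(by positivity : 0 ≤ (Fintype.card V : ℝ) ^ (-phi))]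
  have hε₀ : 0 < (Fintype.card V : ℝ) ^ (-phi) := by positivity
  have hε₁ : (Fintype.card V : ℝ) ^ (-phi) < 1 :=
    Real.rpow_lt_one_of_one_lt_of_neg hN (by linarith)
  obtain ⟨I', hI', hk, a, ha⟩ := Finset.exists_subset_monochromatic _ hm₀ k
    (fun i hi j hj hij => hSR.pairColor_lt hi hj hij.ne hphi0 hμ₁ hN) hK
  refine ⟨I', hI', hk, _, by positivity,
    pow_le_one₀ (by positivity) (pow_le_one₀ hε₀.le hε₁.le),
    hSR.isBand_of_pairColor_eq hphi0 hμ hN hI' a fun h hh j hj hhj => ?_⟩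
  rcases hhj.lt_or_gt with hlt | hlt
  · exact ha h hh j hj hlt
  · rw [pairColor_comm]
    exact ha j hj h hh hlt

/-- For every integer `k ≥ 0` and `0 < φ, μ ≤ 1` with `φ ≤ 1/5`, there is
an integer `K ≥ k` such that for every graph `G` and every `(φ,μ)`-shrink-resistant
blockade of length at least `K` in `G` with `1 - μ ≥ |G|^(-φ)`, there exists `I' ⊆ I`
with `|I'| = k` such that `(B i : i ∈ I')` has a `(5φ,μ)`-band. -/
theorem stmt_6 (k : ℕ) (phi mu : ℝ) (hphi0 : 0 < phi) (hphi1 : phi ≤ 1)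
    (hphi5 : phi ≤ 1 / 5) (hmu0 : 0 < mu) (hmu1 : mu ≤ 1) :
    ∃ K : ℕ, k ≤ K ∧
      ∀ (V : Type) [Fintype V] (G : SimpleGraph V) (I : Finset ℤ) (B : ℤ → Set V),
        IsBlockade I B → ShrinkResistant G I B phi mu → K ≤ I.card →
        (Fintype.card V : ℝ) ^ (-phi) ≤ 1 - mu →
        ∃ I' ⊆ I, I'.card = k ∧
          ∃ tau : ℝ, 0 < tau ∧ tau ≤ 1 ∧ IsBand G I' B tau (5 * phi) mu :=
  stmt_6_general k phi mu hphi0 hmu0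
end

section
/- For every ordered graph H, there exists a (finite simple) graph H' such that, for every linear ordering of the vertex set of H', the resulting ordered graph contains H. -/
/-!
Take for `H'` the graph on `𝔽₂^d` in which distinct `x, y` are adjacent when `x ⬝ᵥ y = 1`.
Orthogonality of the characters `a ↦ (-1)^(a ⬝ᵥ c)` gives
`∑ a, (∑ b ∈ B, (-1)^(a ⬝ᵥ b))² = |B| 2^d`, so for disjoint `A, B` at most `4 · 2^d / |B|`
vertices of `A` fail to see between a quarter and three quarters of `B` as neighbours.
Given any ordering of `H'`, cut it into `|H|` consecutive intervals and embed the vertices of `H`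
greedily in increasing order: the image of the first vertex is chosen in its interval balanced
towards all later intervals, each later interval is shrunk to the neighbours or non-neighbours of
that image as `H` prescribes, losing at most a factor `4`, and we recurse.
-/

open Finset Function Matrix

namespace SimpleGraph

variable {V : Type*} (G : SimpleGraph V) [DecidableRel G.Adj]

def IsBalanced (x : V) (B : Finset V) : Prop :=
  #B ≤ 4 * #{y ∈ B | G.Adj x y} ∧ #B ≤ 4 * #{y ∈ B | ¬G.Adj x y}

instance (x : V) (B : Finset V) : Decidable (G.IsBalanced x B) :=
  inferInstanceAs (Decidable (_ ∧ _))

def FewUnbalanced (N : ℕ) : Prop :=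
  ∀ A B : Finset V, Disjoint A B → #{x ∈ A | ¬G.IsBalanced x B} * #B ≤ N

variable {G}

lemma sq_card_le_of_not_isBalanced {x : V} {B : Finset V} (h : ¬G.IsBalanced x B) :
    (#B : ℤ) ^ 2 ≤ 4 * ((#{y ∈ B | ¬G.Adj x y} : ℤ) - #{y ∈ B | G.Adj x y}) ^ 2 := by
  have hB := card_filter_add_card_filter_not (s := B) (G.Adj x)
  unfold IsBalanced at h
  rw [← hB]
  push_cast
  rcases not_and_or.mp h with h | h <;> push Not at h <;> nlinarith

lemma IsBalanced.le_card_filter_iff {x : V} {B : Finset V} (hx : G.IsBalanced x B) (p : Prop)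
    [Decidable p] {M : ℕ} (hB : 4 * M ≤ #B) : M ≤ #{y ∈ B | G.Adj x y ↔ p} := by
  obtain ⟨h₁, h₂⟩ := hx
  by_cases hp : p <;> simp only [hp, iff_true, iff_false] <;> omega

lemma exists_mem_forall_isBalanced {N : ℕ} (hG : G.FewUnbalanced N) {m M : ℕ} (A : Finset V)
    (D : Fin m → Finset V) (hAD : ∀ j, Disjoint A (D j)) (hD : ∀ j, M ≤ #(D j))
    (hN : m * N < M * #A) : ∃ x ∈ A, ∀ j, G.IsBalanced x (D j) := by
  classical
  by_contra! h
  have hcover : A ⊆ univ.biUnion fun j => {x ∈ A | ¬G.IsBalanced x (D j)} := by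
    intro x hx
    obtain ⟨j, hj⟩ := h x hx
    exact mem_biUnion.mpr ⟨j, mem_univ j, mem_filter.mpr ⟨hx, hj⟩⟩
  have hbad : ∀ j, #{x ∈ A | ¬G.IsBalanced x (D j)} * M ≤ N := fun j =>
    (Nat.mul_le_mul_left _ (hD j)).trans (hG A (D j) (hAD j))
  have : M * #A ≤ m * N := calc
    M * #A ≤ M * ∑ j, #{x ∈ A | ¬G.IsBalanced x (D j)} :=
      Nat.mul_le_mul_left _ ((card_le_card hcover).trans card_biUnion_le)
    _ = ∑ j, #{x ∈ A | ¬G.IsBalanced x (D j)} * M := by rw [mul_sum]; simp_rw [mul_comm]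
    _ ≤ ∑ _j : Fin m, N := sum_le_sum fun j _ => hbad j
    _ = m * N := by simp
  omega

theorem exists_induced_embedding_of_fewUnbalanced {N : ℕ} (hG : G.FewUnbalanced N) {s : ℕ} :
    ∀ {m : ℕ} (K : SimpleGraph (Fin m)) (C : Fin m → Finset V), Pairwise (Disjoint on C) →
      (∀ i, 4 ^ m * s ≤ #(C i)) → m * N < s * s →
      ∃ f : Fin m → V, (∀ i, f i ∈ C i) ∧ ∀ a b, G.Adj (f a) (f b) ↔ K.Adj a b
  | 0, _, _, _, _, _ => ⟨Fin.elim0, fun i => i.elim0, fun a => a.elim0⟩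
  | m + 1, K, C, hC, hsize, hN => by
    classical
    have hsM : s ≤ 4 ^ (m + 1) * s := Nat.le_mul_of_pos_left s (by positivity)
    obtain ⟨x, hx, hbal⟩ := exists_mem_forall_isBalanced hG (C 0) (fun j => C j.succ)
      (fun j => hC (Fin.succ_ne_zero j).symm) (fun j => hsize j.succ)
      (calc m * N ≤ (m + 1) * N := by gcongr; omega
        _ < s * s := hN
        _ ≤ 4 ^ (m + 1) * s * #(C 0) := Nat.mul_le_mul hsM ((hsM.trans (hsize 0))))
    set C' : Fin m → Finset V := fun j => {y ∈ C j.succ | G.Adj x y ↔ K.Adj 0 j.succ}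
    have hC'sub : ∀ j, C' j ⊆ C j.succ := fun j => filter_subset _ _
    obtain ⟨g, hg, hgK⟩ := exists_induced_embedding_of_fewUnbalanced hG (K.comap Fin.succ) C'
      (fun i j hij => (hC (Fin.succ_injective _ |>.ne hij)).mono (hC'sub i) (hC'sub j))
      (fun j => (hbal j).le_card_filter_iff _ (by rw [← mul_assoc, ← pow_succ']; exact hsize _))
      ((Nat.mul_le_mul_right N (Nat.le_succ m)).trans_lt hN)
    have hx' : ∀ j, G.Adj x (g j) ↔ K.Adj 0 j.succ := fun j => (mem_filter.mp (hg j)).2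
    refine ⟨Fin.cons x g, fun i => Fin.cases hx (fun j => hC'sub j (hg j)) i, fun a b => ?_⟩
    cases a using Fin.cases <;> cases b using Fin.cases <;>
      simp [hx', G.adj_comm _ x, K.adj_comm _ 0, hgK]

end SimpleGraph

lemma exists_ordered_blocks {V : Type*} [Fintype V] [LinearOrder V] {k u : ℕ}
    (h : k * u ≤ Fintype.card V) :
    ∃ C : Fin k → Finset V, (∀ i, #(C i) = u) ∧
      ∀ i j, i < j → ∀ x ∈ C i, ∀ y ∈ C j, x < y := by
  have hlt : ∀ (i : Fin k) (t : Fin u), i * u + t < Fintype.card V := fun i t =>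
    calc (i : ℕ) * u + t < (i + 1) * u := by rw [add_one_mul]; have := t.2; omega
      _ ≤ k * u := Nat.mul_le_mul_right u i.2
      _ ≤ _ := h
  let φ := monoEquivOfFin V rfl
  let g (i : Fin k) : Fin u ↪ V :=
    ⟨fun t => φ ⟨i * u + t, hlt i t⟩, fun t t' htt' => by
      have := Fin.mk.inj_iff.mp (φ.injective htt'); omega⟩
  refine ⟨fun i => univ.map (g i), fun i => by simp, ?_⟩
  simp only [mem_map, mem_univ, true_and, forall_exists_index, forall_apply_eq_imp_iff]
  intro i j hij t t'
  refine φ.strictMono (Fin.mk_lt_mk.mpr ?_)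
  have : (i + 1 : ℕ) * u ≤ j * u := Nat.mul_le_mul_right u hij
  rw [add_one_mul] at this
  have := t.2
  omega

theorem ordGraphContains_of_fewUnbalanced {V W : Type} [Fintype V] [LinearOrder V]
    {G : SimpleGraph V} [DecidableRel G.Adj] {N s : ℕ} (hG : G.FewUnbalanced N)
    [Fintype W] [LinearOrder W] (H : SimpleGraph W) (hN : Fintype.card W * N < s * s)
    (hV : Fintype.card W * (4 ^ Fintype.card W * s) ≤ Fintype.card V) :
    OrdGraphContains G H := by
  obtain ⟨C, hC, hCord⟩ := exists_ordered_blocks hV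
  have hCdisj : Pairwise (Disjoint on C) := by
    intro i j hij
    rw [onFun, disjoint_left]
    intro x hxi hxj
    rcases hij.lt_or_gt with h | h
    · exact lt_irrefl x (hCord i j h x hxi x hxj)
    · exact lt_irrefl x (hCord j i h x hxj x hxi)
  let σ := monoEquivOfFin W rfl
  obtain ⟨g, hgC, hg⟩ := G.exists_induced_embedding_of_fewUnbalanced hG (H.comap σ) C hCdisj
    (fun i => (hC i).ge) hN
  exact ⟨g ∘ σ.symm, fun a b hab => hCord _ _ (σ.symm.lt_iff_lt.mpr hab) _ (hgC _) _ (hgC _),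
    fun a b => by simp [hg]⟩

def signChar : AddChar (ZMod 2) ℤ := AddChar.zmodChar 2 (ζ := -1) (by norm_num)

lemma signChar_apply (u : ZMod 2) : signChar u = if u = 1 then -1 else 1 := by
  fin_cases u <;> rfl

section DotProductGraph

variable {ι : Type*} [Fintype ι]

def dotProductChar (c : ι → ZMod 2) : AddChar (ι → ZMod 2) ℤ :=
  signChar.compAddMonoidHom (AddMonoidHom.mk' (· ⬝ᵥ c) fun a b => add_dotProduct a b c)

lemma dotProductChar_apply (c a : ι → ZMod 2) : dotProductChar c a = signChar (a ⬝ᵥ c) := rfl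

lemma dotProductChar_eq_zero_iff {c : ι → ZMod 2} : dotProductChar c = 0 ↔ c = 0 := by
  classical
  refine ⟨fun h => ?_, fun h => by ext a; simp [dotProductChar_apply, h]⟩
  by_contra hc
  obtain ⟨i, hi⟩ := Function.ne_iff.mp hc
  have hci : c i = 1 := (by decide : ∀ u : ZMod 2, u ≠ 0 → u = 1) _ hi
  have := congrArg (· (Pi.single i 1)) h
  simp [dotProductChar_apply, single_dotProduct, hci, signChar_apply] at this

lemma sum_signChar_dotProduct [DecidableEq ι] (c : ι → ZMod 2) :
    ∑ a, signChar (a ⬝ᵥ c) = if c = 0 then (Fintype.card (ι → ZMod 2) : ℤ) else 0 := by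
  simpa [dotProductChar_apply, dotProductChar_eq_zero_iff] using (dotProductChar c).sum_eq_ite

lemma sum_sq_sum_signChar_dotProduct [DecidableEq ι] (B : Finset (ι → ZMod 2)) :
    ∑ a, (∑ b ∈ B, signChar (a ⬝ᵥ b)) ^ 2 = #B * Fintype.card (ι → ZMod 2) := by
  have hsq : ∀ a : ι → ZMod 2, (∑ b ∈ B, signChar (a ⬝ᵥ b)) ^ 2 =
      ∑ b ∈ B, ∑ b' ∈ B, signChar (a ⬝ᵥ (b + b')) := fun a => by
    simp only [sq, sum_mul_sum, dotProduct_add, AddChar.map_add_eq_mul]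
  have hzero : ∀ b b' : ι → ZMod 2, b + b' = 0 ↔ b = b' := fun b b' => by
    rw [add_eq_zero_iff_eq_neg, show -b' = b' from funext fun i => ZMod.neg_eq_self_mod_two _]
  simp_rw [hsq]
  rw [sum_comm]
  simp_rw [sum_comm (s := univ), sum_signChar_dotProduct, hzero, sum_ite_eq]
  simp

def dotProductGraph (ι : Type*) [Fintype ι] : SimpleGraph (ι → ZMod 2) where
  Adj x y := x ≠ y ∧ x ⬝ᵥ y = 1
  symm := ⟨fun x y h => ⟨h.1.symm, dotProduct_comm y x ▸ h.2⟩⟩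
  loopless := ⟨fun _ h => h.1 rfl⟩

instance : DecidableRel (dotProductGraph ι).Adj := fun x y =>
  inferInstanceAs (Decidable (x ≠ y ∧ x ⬝ᵥ y = 1))

lemma sum_signChar_dotProduct_of_notMem {x : ι → ZMod 2} {B : Finset (ι → ZMod 2)}
    (hx : x ∉ B) :
    ∑ b ∈ B, signChar (x ⬝ᵥ b) =
      (#{b ∈ B | ¬(dotProductGraph ι).Adj x b} : ℤ) - #{b ∈ B | (dotProductGraph ι).Adj x b} := by
  have hadj : ∀ b ∈ B, (dotProductGraph ι).Adj x b ↔ x ⬝ᵥ b = 1 := fun b hb =>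
    and_iff_right (ne_of_mem_of_not_mem hb hx).symm
  calc ∑ b ∈ B, signChar (x ⬝ᵥ b)
      = ∑ b ∈ B, if (dotProductGraph ι).Adj x b then -1 else 1 :=
        sum_congr rfl fun b hb => by simp only [signChar_apply, hadj b hb]
    _ = _ := by rw [sum_ite]; simp [sub_eq_neg_add]

theorem fewUnbalanced_dotProductGraph [DecidableEq ι] :
    (dotProductGraph ι).FewUnbalanced (4 * Fintype.card (ι → ZMod 2)) := by
  intro A B hAB
  set bad := {x ∈ A | ¬(dotProductGraph ι).IsBalanced x B}
  rcases (#B).eq_zero_or_pos with hB | hB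
  · simp [hB]
  have key :
      ((#bad * #B : ℕ) : ℤ) * #B ≤ ((4 * Fintype.card (ι → ZMod 2) : ℕ) : ℤ) * #B := by
    push_cast
    calc (#bad : ℤ) * #B * #B = ∑ _a ∈ bad, (#B : ℤ) ^ 2 := by simp; ring
      _ ≤ ∑ a ∈ bad, 4 * (∑ b ∈ B, signChar (a ⬝ᵥ b)) ^ 2 := sum_le_sum fun a ha => by
        obtain ⟨haA, hbal⟩ := mem_filter.mp ha
        rw [sum_signChar_dotProduct_of_notMem (disjoint_left.mp hAB haA)]
        exact SimpleGraph.sq_card_le_of_not_isBalanced hbal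
      _ ≤ ∑ a, 4 * (∑ b ∈ B, signChar (a ⬝ᵥ b)) ^ 2 :=
        sum_le_sum_of_subset_of_nonneg (subset_univ _) fun _ _ _ => by positivity
      _ = 4 * Fintype.card (ι → ZMod 2) * #B := by
        rw [← mul_sum, sum_sq_sum_signChar_dotProduct]; ring
  exact_mod_cast le_of_mul_le_mul_right key (by exact_mod_cast hB)

end DotProductGraph

-- `2 ^ d` vertices hold `k` intervals of size `4 ^ k * s`, and `s` is large enough for
-- `exists_induced_embedding_of_fewUnbalanced` with `N = 4 * 2 ^ d`.
lemma exists_dim_blockSize (k : ℕ) :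
    ∃ d s : ℕ, k * (4 * 2 ^ d) < s * s ∧ k * (4 ^ k * s) ≤ 2 ^ d := by
  have hk := k.lt_two_pow_self
  refine ⟨7 * k + 2, 2 ^ (4 * k + 2), ?_, ?_⟩
  · calc k * (4 * 2 ^ (7 * k + 2)) < 2 ^ k * (4 * 2 ^ (7 * k + 2)) := by gcongr
      _ = 2 ^ (4 * k + 2) * 2 ^ (4 * k + 2) := by ring
  · calc k * (4 ^ k * 2 ^ (4 * k + 2)) ≤ 2 ^ k * (4 ^ k * 2 ^ (4 * k + 2)) := by gcongr
      _ = 2 ^ (7 * k + 2) := by rw [show (4 : ℕ) = 2 ^ 2 by norm_num, ← pow_mul]; ring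

/-- Rödl–Winkler: For every ordered graph `H`, there exists a finite
graph `H'` such that for every linear ordering of the vertex set of `H'`, the
resulting ordered graph contains `H`. -/
theorem stmt_18 {W : Type} [Fintype W] [LinearOrder W] (H : SimpleGraph W) :
    ∃ (n : ℕ) (H' : SimpleGraph (Fin n)),
      ∀ L : LinearOrder (Fin n),
        ∃ f : W → Fin n, (∀ a b : W, a < b → L.lt (f a) (f b)) ∧
          ∀ a b : W, H'.Adj (f a) (f b) ↔ H.Adj a b := by
  obtain ⟨d, s, hN, hV⟩ := exists_dim_blockSize (Fintype.card W)
  have hcard : Fintype.card (Fin d → ZMod 2) = 2 ^ d := by simp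
  let e := Fintype.equivFin (Fin d → ZMod 2)
  refine ⟨_, (dotProductGraph (Fin d)).comap e.symm, fun L => ?_⟩
  -- with `L` pulled back along `e`, `f a < f b` is `L.lt (e (f a)) (e (f b))` by definition
  let _ : LinearOrder (Fin d → ZMod 2) := @LinearOrder.lift' _ _ L e e.injective
  obtain ⟨f, hf, hadj⟩ := ordGraphContains_of_fewUnbalanced fewUnbalanced_dotProductGraph H
    (hcard ▸ hN) (hcard ▸ hV)
  exact ⟨e ∘ f, fun a b hab => hf hab, fun a b => by simpa using hadj a b⟩
end
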